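/- Let X be a Lindelöf space admitting a complete sequence of countable disjoint F_σ covers. Then for every compactification cX of X, X is an F_σδ subset of cX. -/

import Mathlib

open Set Topology Filter

/-!
For each `n` write `X = ⋃ᵢ Aₙᵢ` with the `Aₙᵢ` pairwise disjoint, and `Aₙᵢ = ⋃ⱼ Pₙᵢⱼ` with the
`Pₙᵢⱼ` closed. For a word `s = (i₀, j₀) … (iₙ₋₁, jₙ₋₁)` the cell `⋂ₖ Pₖᵢₖⱼₖ` is closed in `X`,
hence Lindelöf, and misses the closures in `K` of the finitely many pieces `Pₖᵢⱼ` with `i, j ≤ n`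
and `i ≠ iₖ`. As `K` is regular, an `F_σ` set `Qₛ` of `K` inside the closure of the cell
separates the two, and `⋂ₙ ⋃_{|s| = n} Qₛ` is an `F_σδ` set containing `X`. Conversely, along
words witnessing that `y` lies in it the colours `iₖ` stabilise, so `y` lies in the closure of
every `A₀τ₀ ∩ … ∩ Aₖτₖ`; completeness of the covers then yields a cluster point in `X`, whose
image is `y` because `K` is Hausdorff.
-/

/-- A set is `F_σ` if it is a countable union of closed sets. -/
def IsFSigma {X : Type*} [TopologicalSpace X] (A : Set X) : Prop :=
  ∃ F : ℕ → Set X, (∀ n, IsClosed (F n)) ∧ A = ⋃ n, F n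

/-- A set is `F_σδ` if it is a countable intersection of countable unions of closed sets. -/
def IsFSigmaDelta {X : Type*} [TopologicalSpace X] (A : Set X) : Prop :=
  ∃ F : ℕ → ℕ → Set X, (∀ n m, IsClosed (F n m)) ∧ A = ⋂ n, ⋃ m, F n m
/-- A sequence of covers of `X` is complete if every (proper) filter on `X` containing
a member of each cover has an accumulation (cluster) point in `X`. -/
def CompleteCoverSeq {X : Type*} [TopologicalSpace X] (𝓕 : ℕ → Set (Set X)) : Prop :=
  (∀ n, ⋃₀ 𝓕 n = Set.univ) ∧
    ∀ F : Filter X, F.NeBot → (∀ n, ∃ A ∈ 𝓕 n, A ∈ F) → ∃ x : X, ClusterPt x F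

section FSigma

variable {X : Type*} [TopologicalSpace X]

theorem IsClosed.isFSigma {A : Set X} (hA : IsClosed A) : IsFSigma A :=
  ⟨fun _ => A, fun _ => hA, (iUnion_const A).symm⟩

theorem isFSigma_iUnion_of_isClosed {ι : Type*} [Countable ι] {F : ι → Set X}
    (hF : ∀ i, IsClosed (F i)) : IsFSigma (⋃ i, F i) := by
  cases isEmpty_or_nonempty ι
  · rw [iUnion_of_empty]
    exact isClosed_empty.isFSigma
  · obtain ⟨g, hg⟩ := exists_surjective_nat ι
    exact ⟨F ∘ g, fun n => hF (g n), (hg.iUnion_comp F).symm⟩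

theorem IsFSigma.iUnion {ι : Type*} [Countable ι] {S : ι → Set X} (hS : ∀ i, IsFSigma (S i)) :
    IsFSigma (⋃ i, S i) := by
  choose F hF hSF using hS
  rw [iUnion_congr hSF, ← iUnion_prod' fun p : ι × ℕ => F p.1 p.2]
  exact isFSigma_iUnion_of_isClosed fun p => hF p.1 p.2

theorem isFSigmaDelta_iInter {S : ℕ → Set X} (hS : ∀ n, IsFSigma (S n)) :
    IsFSigmaDelta (⋂ n, S n) := by
  choose F hF hSF using hS
  exact ⟨F, hF, iInter_congr hSF⟩

theorem IsLindelof.exists_isFSigma_between [RegularSpace X] {L C : Set X} (hL : IsLindelof L)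
    (hC : IsClosed C) (hLC : Disjoint L C) :
    ∃ Q, IsFSigma Q ∧ L ⊆ Q ∧ Q ⊆ closure L ∧ Disjoint Q C := by
  have hnhds : ∀ x ∈ L, ∃ t ∈ 𝓝 x, IsClosed t ∧ t ⊆ Cᶜ := fun x hx =>
    exists_mem_nhds_isClosed_subset (hC.isOpen_compl.mem_nhds (hLC.subset_compl_right hx))
  choose! t ht htC htCc using hnhds
  obtain ⟨c, hc, hcL, hLc⟩ := hL.elim_nhds_subcover t ht
  have := hc.to_subtype
  refine ⟨⋃ x : c, closure L ∩ t x,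
    isFSigma_iUnion_of_isClosed fun x => isClosed_closure.inter (htC x (hcL x x.2)), ?_,
    iUnion_subset fun _ => inter_subset_left, ?_⟩
  · intro x hx
    obtain ⟨z, hz, hxz⟩ := mem_iUnion₂.1 (hLc hx)
    exact mem_iUnion.2 ⟨⟨z, hz⟩, subset_closure hx, hxz⟩
  · exact disjoint_iUnion_left.2 fun x =>
      subset_compl_iff_disjoint_right.1 (inter_subset_right.trans (htCc x (hcL x x.2)))

end FSigma

open Function

theorem exists_nat_indexing_of_countable_pairwiseDisjoint {X : Type*} {𝓓 : Set (Set X)}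
    (hc : 𝓓.Countable) (hd : 𝓓.PairwiseDisjoint id) :
    ∃ A : ℕ → Set X, Pairwise (Disjoint on A) ∧ ⋃ i, A i = ⋃₀ 𝓓 ∧ ∀ i, A i = ∅ ∨ A i ∈ 𝓓 := by
  have := hc.to_subtype
  obtain ⟨code, hcode⟩ := Countable.exists_injective_nat 𝓓
  set A := extend code (fun D : 𝓓 => (D : Set X)) fun _ => ∅
  have hA : ∀ i, A i = ∅ ∨ A i ∈ 𝓓 := by
    intro i
    by_cases hi : ∃ D, code D = i
    · obtain ⟨D, rfl⟩ := hi
      exact Or.inr (by simp [A, hcode.extend_apply])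
    · exact Or.inl (extend_apply' _ _ _ hi)
  refine ⟨A, fun i j hij => ?_, ?_, hA⟩
  · by_cases hi : ∃ D, code D = i
    · by_cases hj : ∃ D, code D = j
      · obtain ⟨⟨D, rfl⟩, ⟨D', rfl⟩⟩ := And.intro hi hj
        simp only [onFun, A, hcode.extend_apply]
        exact hd D.2 D'.2 fun h => hij (congrArg code (Subtype.ext h))
      · simp [onFun, A, extend_apply' _ _ _ hj]
    · simp [onFun, A, extend_apply' _ _ _ hi]
  · ext x
    simp only [mem_iUnion, mem_sUnion]
    constructor
    · rintro ⟨i, hx⟩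
      rcases hA i with h | h
      · simp [h] at hx
      · exact ⟨_, h, hx⟩
    · rintro ⟨D, hD, hx⟩
      exact ⟨code ⟨D, hD⟩, by simpa [A, hcode.extend_apply] using hx⟩

theorem mem_range_of_forall_mem_closure_image {X K : Type*} [TopologicalSpace X]
    [TopologicalSpace K] [T2Space K] {e : X → K} (he : Continuous e) {B : ℕ → Set X}
    (hB : Antitone B) {y : K} (hy : ∀ k, y ∈ closure (e '' B k))
    (hcomplete : ∀ F : Filter X, F.NeBot → (∀ k, B k ∈ F) → ∃ x, ClusterPt x F) :
    y ∈ range e := by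
  set F := (⨅ k, 𝓟 (B k)) ⊓ comap e (𝓝 y)
  have hF : F.NeBot := by
    refine ((hasBasis_iInf_principal hB.directed_ge).inf_neBot_iff).2 fun k _ V hV => ?_
    obtain ⟨W, hW, hWV⟩ := mem_comap.1 hV
    obtain ⟨_, hzW, x, hxB, rfl⟩ := mem_closure_iff_nhds.1 (hy k) W hW
    exact ⟨x, hxB, hWV hzW⟩
  obtain ⟨x, hx⟩ :=
    hcomplete F hF fun k => mem_inf_of_left (mem_iInf_of_mem k (mem_principal_self _))
  have hxy : ClusterPt (e x) (𝓝 y) :=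
    hx.map he.continuousAt (tendsto_comap.mono_left inf_le_right)
  exact ⟨x, eq_of_nhds_neBot hxy⟩

section Scheme

variable {X K : Type*} [TopologicalSpace K]

def schemeCell (P : ℕ → ℕ → ℕ → Set X) {n : ℕ} (s : Fin n → ℕ × ℕ) : Set X :=
  ⋂ k : Fin n, P k (s k).1 (s k).2

/-- Only the indices `i, j ≤ n` enter, so that this set is closed; as `n` grows every piece of
a wrong colour `i` eventually enters, which is what forces the colours of a branch to stabilise. -/
def schemeConflict (e : X → K) (P : ℕ → ℕ → ℕ → Set X) {n : ℕ} (s : Fin n → ℕ × ℕ) : Set K :=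
  ⋃ (k : Fin n) (i : Fin (n + 1)) (j : Fin (n + 1)) (_ : (i : ℕ) ≠ (s k).1),
    closure (e '' P k i j)

variable {e : X → K} {P : ℕ → ℕ → ℕ → Set X} {n : ℕ}

theorem schemeCell_subset (s : Fin n → ℕ × ℕ) (k : Fin n) :
    schemeCell P s ⊆ P k (s k).1 (s k).2 :=
  iInter_subset _ k

theorem isClosed_schemeCell [TopologicalSpace X] (hP : ∀ n i j, IsClosed (P n i j))
    (s : Fin n → ℕ × ℕ) : IsClosed (schemeCell P s) :=
  isClosed_iInter fun _ => hP _ _ _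

theorem isClosed_schemeConflict (s : Fin n → ℕ × ℕ) : IsClosed (schemeConflict e P s) :=
  isClosed_iUnion_of_finite fun _ => isClosed_iUnion_of_finite fun _ =>
    isClosed_iUnion_of_finite fun _ => isClosed_iUnion_of_finite fun _ => isClosed_closure

theorem disjoint_image_schemeCell_schemeConflict [TopologicalSpace X] (he : IsInducing e)
    (hP : ∀ n i j, IsClosed (P n i j))
    (hdisj : ∀ n i i' j j', i ≠ i' → Disjoint (P n i j) (P n i' j')) (s : Fin n → ℕ × ℕ) :
    Disjoint (e '' schemeCell P s) (schemeConflict e P s) := by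
  rw [disjoint_left]
  rintro _ ⟨x, hx, rfl⟩ hcon
  simp only [schemeConflict, mem_iUnion] at hcon
  obtain ⟨k, i, j, hik, hcl⟩ := hcon
  have hxP : x ∈ P k i j := by
    rw [← (hP _ _ _).closure_eq, he.closure_eq_preimage_closure_image]
    exact hcl
  exact disjoint_left.1 (hdisj _ _ _ _ _ hik) hxP (schemeCell_subset s k hx)

theorem fst_eq_of_notMem_schemeConflict {s : Fin n → ℕ × ℕ} {y : K}
    (hy : y ∉ schemeConflict e P s) (k : Fin n) {i j : ℕ} (hi : i ≤ n) (hj : j ≤ n)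
    (hyP : y ∈ closure (e '' P k i j)) : (s k).1 = i := by
  by_contra hne
  simp only [schemeConflict, mem_iUnion] at hy
  exact hy ⟨k, ⟨i, by omega⟩, ⟨j, by omega⟩, Ne.symm hne, hyP⟩

theorem exists_branch_of_forall_mem_closure_schemeCell {y : K}
    (hy : ∀ n, ∃ s : Fin n → ℕ × ℕ, y ∈ closure (e '' schemeCell P s) ∧ y ∉ schemeConflict e P s) :
    ∃ τ : ℕ → ℕ, ∀ k, y ∈ closure (e '' ⋂ l ∈ Iio k, ⋃ j, P l (τ l) j) := by
  choose s hcl hcon using hy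
  set p : ℕ → ℕ × ℕ := fun k => s (k + 1) (Fin.last k)
  have hyp : ∀ l, y ∈ closure (e '' P l (p l).1 (p l).2) := fun l =>
    closure_mono (image_mono (schemeCell_subset _ (Fin.last l))) (hcl (l + 1))
  refine ⟨fun l => (p l).1, fun k => ?_⟩
  obtain ⟨n, hkn, hn⟩ : ∃ n, k ≤ n ∧ ∀ l ∈ Iio k, (p l).1 ≤ n ∧ (p l).2 ≤ n :=
    ((eventually_ge_atTop k).and ((eventually_all_finite (finite_Iio k)).2 fun l _ =>
      (eventually_ge_atTop _).and (eventually_ge_atTop _))).exists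
  refine closure_mono (image_mono fun x hx => ?_) (hcl n)
  simp only [mem_iInter, mem_iUnion]
  intro l (hl : l < k)
  have hln : l < n := by omega
  have hcolour := fst_eq_of_notMem_schemeConflict (hcon n) ⟨l, hln⟩ (hn l hl).1 (hn l hl).2 (hyp l)
  exact ⟨(s n ⟨l, hln⟩).2, hcolour ▸ schemeCell_subset _ ⟨l, hln⟩ hx⟩

end Scheme

theorem isFSigmaDelta_range_of_complete_disjoint_covers {X K : Type*} [TopologicalSpace X]
    [LindelofSpace X] [TopologicalSpace K] [T2Space K] [RegularSpace K] {e : X → K}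
    (he : IsInducing e) (A : ℕ → ℕ → Set X) (hcover : ∀ n, ⋃ i, A n i = univ)
    (hdisj : ∀ n, Pairwise (Disjoint on A n)) (hfs : ∀ n i, IsFSigma (A n i))
    (hcomplete : ∀ F : Filter X, F.NeBot → (∀ n, ∃ i, A n i ∈ F) → ∃ x, ClusterPt x F) :
    IsFSigmaDelta (range e) := by
  choose P hPcl hAP using hfs
  have hPdisj : ∀ n i i' j j', i ≠ i' → Disjoint (P n i j) (P n i' j') := fun n i i' j j' h =>
    (hdisj n h).mono ((subset_iUnion _ j).trans (hAP n i).superset)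
      ((subset_iUnion _ j').trans (hAP n i').superset)
  have hQ : ∀ n (s : Fin n → ℕ × ℕ), ∃ Q, IsFSigma Q ∧ e '' schemeCell P s ⊆ Q ∧
      Q ⊆ closure (e '' schemeCell P s) ∧ Disjoint Q (schemeConflict e P s) := fun _ s =>
    ((isClosed_schemeCell hPcl s).isLindelof.image he.continuous).exists_isFSigma_between
      (isClosed_schemeConflict s) (disjoint_image_schemeCell_schemeConflict he hPcl hPdisj s)
  choose Q hQfs hcellQ hQcl hQcon using hQ
  suffices range e = ⋂ n, ⋃ s, Q n s by
    rw [this]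
    exact isFSigmaDelta_iInter fun n => IsFSigma.iUnion (hQfs n)
  refine Subset.antisymm ?_ fun y hy => ?_
  · rintro _ ⟨x, rfl⟩
    have hxP : ∀ k, ∃ p : ℕ × ℕ, x ∈ P k p.1 p.2 := fun k => by
      obtain ⟨i, hi⟩ := mem_iUnion.1 ((hcover k).symm ▸ mem_univ x)
      obtain ⟨j, hj⟩ := mem_iUnion.1 (hAP k i ▸ hi)
      exact ⟨(i, j), hj⟩
    choose p hp using hxP
    exact mem_iInter.2 fun n =>
      mem_iUnion.2 ⟨fun k => p k, hcellQ n _ (mem_image_of_mem e (mem_iInter.2 fun k => hp k))⟩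
  · obtain ⟨τ, hτ⟩ := exists_branch_of_forall_mem_closure_schemeCell fun n =>
      let ⟨s, hs⟩ := mem_iUnion.1 (mem_iInter.1 hy n)
      ⟨s, hQcl n s hs, disjoint_left.1 (hQcon n s) hs⟩
    simp_rw [← hAP] at hτ
    exact mem_range_of_forall_mem_closure_image he.continuous
      (fun k k' hkk' => biInter_subset_biInter_left (Iio_subset_Iio hkk')) hτ
      fun F hF hB => hcomplete F hF fun n =>
        ⟨τ n, mem_of_superset (hB (n + 1)) (biInter_subset_of_mem (lt_add_one n))⟩

/-- A Lindelöf space with a complete sequence of countable disjoint `F_σ` covers is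
`F_σδ` in every compactification. -/
theorem absolutely_FSigmaDelta_of_disjoint_FSigma_covers {X : Type u} [TopologicalSpace X]
    [LindelofSpace X]
    (𝓓 : ℕ → Set (Set X)) (h : CompleteCoverSeq 𝓓)
    (hcnt : ∀ n, (𝓓 n).Countable) (hfs : ∀ n, ∀ A ∈ 𝓓 n, IsFSigma A)
    (hdisj : ∀ n, ∀ A ∈ 𝓓 n, ∀ B ∈ 𝓓 n, A ≠ B → Disjoint A B) :
    ∀ (K : Type u) [TopologicalSpace K] [CompactSpace K] [T2Space K] (e : X → K),
      IsEmbedding e → DenseRange e → IsFSigmaDelta (Set.range e) := by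
  intro K _ _ _ e he _
  choose A hAdisj hAU hAmem using fun n =>
    exists_nat_indexing_of_countable_pairwiseDisjoint (hcnt n) (hdisj n)
  refine isFSigmaDelta_range_of_complete_disjoint_covers he.isInducing A
    (fun n => (hAU n).trans (h.1 n)) hAdisj (fun n i => ?_) fun F hF hFA => h.2 F hF fun n => ?_
  · rcases hAmem n i with hempty | hmem
    · exact hempty ▸ isClosed_empty.isFSigma
    · exact hfs n _ hmem
  · obtain ⟨i, hi⟩ := hFA n
    rcases hAmem n i with hempty | hmem
    · exact (hF.ne (empty_mem_iff_bot.1 (hempty ▸ hi))).elim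
    · exact ⟨A n i, hmem, hi⟩
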